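/- arXiv:2401.12526 — 5 statements merged into one kernel-verified Lean document; each statement's English description precedes it below -/
import Mathlib

section
/- For every x with 0 < x ≤ 1, ∫₀^x √(log(1/ε)) dε ≤ 2x √(log(4/x)). -/
open MeasureTheory Set

theorem integral_sqrt_log_inv_le (x : ℝ) (hx0 : 0 < x) (hx1 : x ≤ 1) :
    ∫ ε in (0 : ℝ)..x, Real.sqrt (Real.log (1 / ε)) ≤ 2 * x * Real.sqrt (Real.log (4 / x)) := by
  obtain ⟨b, hbdef⟩ : ∃ b', b' = Real.log (4 / x) := ⟨_, rfl⟩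
  obtain ⟨s, hsdef⟩ : ∃ s', s' = Real.sqrt b := ⟨_, rfl⟩
  rw [← hbdef, ← hsdef]
  obtain ⟨δ, hδdef⟩ : ∃ d', d' = 1 / (3 * b) := ⟨_, rfl⟩
  have hx4 : (4 : ℝ) ≤ 4 / x := by
    rw [le_div_iff₀ hx0]; nlinarith
  have hlog2 : (0.6931471803 : ℝ) < Real.log 2 := Real.log_two_gt_d9
  have hlog4 : Real.log 4 = 2 * Real.log 2 := by
    rw [show (4:ℝ) = 2^2 by norm_num, Real.log_pow]; push_cast; ring
  have hb : (4/3 : ℝ) ≤ b := by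
    have h1 : Real.log 4 ≤ b := hbdef ▸ Real.log_le_log (by norm_num) hx4
    linarith
  have hb0 : 0 < b := by linarith
  have hs0 : 0 < s := hsdef ▸ Real.sqrt_pos.mpr hb0
  have hs2 : s ^ 2 = b := hsdef ▸ Real.sq_sqrt hb0.le
  have hδ0 : 0 < δ := by rw [hδdef]; positivity
  have hδ1 : δ ≤ 1/4 := by
    rw [hδdef, div_le_iff₀ (by linarith)]; linarith
  have hδlt1 : δ < 1 := by linarith
  have hbδ : 3 * b * δ = 1 := by rw [hδdef]; field_simp
  -- bound x ^ (-δ)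
  have hxd : x ^ (-δ) ≤ 2 * (1 - δ) := by
    have hlogx : Real.log x = Real.log 4 - b := by
      rw [hbdef, Real.log_div (by norm_num) hx0.ne']; ring
    have h1 : x ^ (-δ) = Real.exp (Real.log x * (-δ)) := Real.rpow_def_of_pos hx0 _
    have h2 : Real.log x * (-δ) ≤ 1/3 := by
      rw [hlogx]
      have hl4 : (0:ℝ) < Real.log 4 := by rw [hlog4]; linarith
      have : (Real.log 4 - b) * -δ = δ * b - δ * Real.log 4 := by ring
      rw [this]
      nlinarith [hbδ, mul_pos hδ0 hl4]
    have h3 : Real.exp (1/3 : ℝ) ≤ 3/2 := by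
      have h4 := Real.add_one_le_exp (-(1/3) : ℝ)
      rw [Real.exp_neg] at h4
      have h5 := Real.exp_pos (1/3 : ℝ)
      have h4' : (2/3:ℝ) ≤ 1 / Real.exp (1/3) := by rw [inv_eq_one_div] at h4; linarith
      rw [le_div_iff₀ h5] at h4'
      linarith
    calc x ^ (-δ) = Real.exp (Real.log x * (-δ)) := h1
      _ ≤ Real.exp (1/3) := Real.exp_le_exp.mpr h2
      _ ≤ 3/2 := h3
      _ ≤ 2 * (1 - δ) := by linarith
  have hx1d : x ^ (1 - δ) ≤ 2 * (1 - δ) * x := by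
    have : x ^ (1 - δ) = x * x ^ (-δ) := by
      rw [show (1 - δ) = 1 + (-δ) by ring, Real.rpow_add hx0, Real.rpow_one]
    rw [this]
    nlinarith
  have hc0 : (0:ℝ) ≤ 3 * s / 2 := by linarith
  have hrpow_int : IntervalIntegrable (fun ε : ℝ => ε ^ (-δ)) volume 0 x :=
    intervalIntegral.intervalIntegrable_rpow' (by linarith)
  have hg_int : IntervalIntegrable
      (fun ε : ℝ => (s/2 - 3*s/2) + 3*s/2 * ε ^ (-δ)) volume 0 x :=
    intervalIntegrable_const.add (hrpow_int.const_mul (3*s/2))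
  -- pointwise bound on Ioc 0 x
  have hfg : ∀ ε ∈ Ioc (0:ℝ) x,
      Real.sqrt (Real.log (1 / ε)) ≤ (s/2 - 3*s/2) + 3*s/2 * ε ^ (-δ) := by
    intro ε hε
    have hε0 : 0 < ε := hε.1
    have hε1 : ε ≤ 1 := hε.2.trans hx1
    have ha0 : 0 ≤ Real.log (1 / ε) := by
      rw [one_div, Real.log_inv]
      linarith [Real.log_nonpos hε0.le hε1]
    have hsa : Real.sqrt (Real.log (1/ε)) ^ 2 = Real.log (1/ε) := Real.sq_sqrt ha0
    have hlogle : Real.log (ε ^ (-δ)) ≤ ε ^ (-δ) - 1 :=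
      Real.log_le_sub_one_of_pos (Real.rpow_pos_of_pos hε0 _)
    have hlr : Real.log (ε ^ (-δ)) = (-δ) * Real.log ε := Real.log_rpow hε0 _
    have hinv : Real.log (1/ε) = - Real.log ε := by rw [one_div, Real.log_inv]
    have h2 : δ * Real.log (1/ε) ≤ ε ^ (-δ) - 1 := by
      rw [hinv]; rw [hlr] at hlogle; linarith
    have h2' : Real.log (1/ε) ≤ 3 * b * (ε ^ (-δ) - 1) := by
      have h := mul_le_mul_of_nonneg_left h2 (by linarith : (0:ℝ) ≤ 3*b)
      calc Real.log (1/ε) = 3*b*δ * Real.log (1/ε) := by rw [hbδ]; ring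
        _ = 3*b*(δ * Real.log (1/ε)) := by ring
        _ ≤ 3*b*(ε ^ (-δ) - 1) := h
    nlinarith [sq_nonneg (Real.sqrt (Real.log (1/ε)) - s), Real.sqrt_nonneg (Real.log (1/ε)),
      hsa, hs2, h2', hs0, ha0]
  -- integrability of f
  have hf_meas : AEStronglyMeasurable (fun ε => Real.sqrt (Real.log (1 / ε)))
      (volume.restrict (Ioc 0 x)) := by
    apply Measurable.aestronglyMeasurable
    exact Real.continuous_sqrt.measurable.comp
      (Real.measurable_log.comp (measurable_const.div measurable_id))
  have hf_int : IntegrableOn (fun ε => Real.sqrt (Real.log (1 / ε))) (Ioc 0 x) := by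
    apply Integrable.mono' ((intervalIntegrable_iff_integrableOn_Ioc_of_le hx0.le).mp hg_int)
      hf_meas
    filter_upwards [ae_restrict_mem measurableSet_Ioc] with ε hε
    rw [Real.norm_eq_abs, abs_of_nonneg (Real.sqrt_nonneg _)]
    exact hfg ε hε
  -- compute integral of g
  have hIg : ∫ ε in (0:ℝ)..x, ((s/2 - 3*s/2) + 3*s/2 * ε ^ (-δ))
      = (s/2 - 3*s/2) * x + 3*s/2 * (x ^ (1 - δ) / (1 - δ)) := by
    rw [intervalIntegral.integral_add intervalIntegrable_const (hrpow_int.const_mul (3*s/2)),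
      intervalIntegral.integral_const, intervalIntegral.integral_const_mul,
      integral_rpow (Or.inl (by linarith : (-1:ℝ) < -δ))]
    rw [Real.zero_rpow (by intro h; linarith : -δ + 1 ≠ 0)]
    rw [smul_eq_mul, show -δ + 1 = 1 - δ by ring]
    ring
  calc ∫ ε in (0:ℝ)..x, Real.sqrt (Real.log (1 / ε))
      = ∫ ε in Ioc (0:ℝ) x, Real.sqrt (Real.log (1 / ε)) :=
        intervalIntegral.integral_of_le hx0.le
    _ ≤ ∫ ε in Ioc (0:ℝ) x, ((s/2 - 3*s/2) + 3*s/2 * ε ^ (-δ)) :=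
        setIntegral_mono_on hf_int
          ((intervalIntegrable_iff_integrableOn_Ioc_of_le hx0.le).mp hg_int)
          measurableSet_Ioc hfg
    _ = (s/2 - 3*s/2) * x + 3*s/2 * (x ^ (1 - δ) / (1 - δ)) := by
        rw [← intervalIntegral.integral_of_le hx0.le]; exact hIg
    _ ≤ 2 * x * s := by
        have h9 : x ^ (1 - δ) / (1 - δ) ≤ 2 * x := by
          rw [div_le_iff₀ (by linarith)]; nlinarith
        nlinarith [mul_le_mul_of_nonneg_left h9 hc0]
end

section
/- Let Φᵢ : ℝ → ℝ be lᵢ-Lipschitz functions for i = 1,…,m and let σ₁,…,σ_m be independent Rademacher random variables (taking values ±1 with probability 1/2). Then for any set A ⊆ ℝ^m, E_σ sup_{a ∈ A} Σᵢ σᵢ Φᵢ(aᵢ) ≤ E_σ sup_{a ∈ A} Σᵢ σᵢ lᵢ aᵢ. -/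
section Helpers

private lemma sSup_add_sSup_le {X Y : Set ℝ} (hX : X.Nonempty) (hY : Y.Nonempty) (c : ℝ)
    (h : ∀ x ∈ X, ∀ y ∈ Y, x + y ≤ c) : sSup X + sSup Y ≤ c := by
  have h1 : sSup X ≤ c - sSup Y := by
    apply csSup_le hX
    intro x hx
    rw [le_sub_iff_add_le]
    have : sSup Y ≤ c - x := csSup_le hY (fun y hy => by linarith [h x hx y hy])
    linarith
  linarith

private lemma key_step {α : Type*} (S : Set α) (hS : S.Nonempty) (T u v : α → ℝ)
    (hb3 : BddAbove ((fun a => T a + v a) '' S)) (hb4 : BddAbove ((fun a => T a - v a) '' S))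
    (h : ∀ a ∈ S, ∀ b ∈ S, u a - u b ≤ |v a - v b|) :
    sSup ((fun a => T a + u a) '' S) + sSup ((fun a => T a - u a) '' S) ≤
    sSup ((fun a => T a + v a) '' S) + sSup ((fun a => T a - v a) '' S) := by
  apply sSup_add_sSup_le (hS.image _) (hS.image _)
  rintro x ⟨a, ha, rfl⟩ y ⟨b, hb, rfl⟩
  dsimp only
  have hab := h a ha b hb
  have h3a : T a + v a ≤ sSup ((fun a => T a + v a) '' S) :=
    le_csSup hb3 ⟨a, ha, rfl⟩
  have h3b : T b + v b ≤ sSup ((fun a => T a + v a) '' S) :=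
    le_csSup hb3 ⟨b, hb, rfl⟩
  have h4a : T a - v a ≤ sSup ((fun a => T a - v a) '' S) :=
    le_csSup hb4 ⟨a, ha, rfl⟩
  have h4b : T b - v b ≤ sSup ((fun a => T a - v a) '' S) :=
    le_csSup hb4 ⟨b, hb, rfl⟩
  rcases abs_cases (v a - v b) with ⟨he, _⟩ | ⟨he, _⟩ <;> rw [he] at hab <;> linarith

private lemma bdd_image_add {α : Type*} {A : Set α} {f g : α → ℝ}
    (hf : BddAbove (f '' A)) (hg : BddAbove (g '' A)) :
    BddAbove ((fun a => f a + g a) '' A) := by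
  obtain ⟨M, hM⟩ := hf
  obtain ⟨N, hN⟩ := hg
  refine ⟨M + N, ?_⟩
  rintro x ⟨a, ha, rfl⟩
  exact add_le_add (hM ⟨a, ha, rfl⟩) (hN ⟨a, ha, rfl⟩)

/-- From boundedness of all full signed sums, deduce boundedness of partial signed sums. -/
private lemma bdd_partial {m : ℕ} (f : Fin m → ℝ → ℝ) (A : Set (Fin m → ℝ))
    (hbd : ∀ ε : Fin m → Bool,
      BddAbove ((fun a => ∑ i, (if ε i then (1 : ℝ) else -1) * f i (a i)) '' A))
    (ε : Fin m → Bool) (I : Finset (Fin m)) :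
    BddAbove ((fun a => ∑ i ∈ I, (if ε i then (1 : ℝ) else -1) * f i (a i)) '' A) := by
  set ε' : Fin m → Bool := fun i => if i ∈ I then ε i else !ε i with hε'
  obtain ⟨M, hM⟩ := hbd ε
  obtain ⟨M', hM'⟩ := hbd ε'
  refine ⟨(M + M') / 2, ?_⟩
  rintro x ⟨a, ha, rfl⟩
  have h1 : (∑ i, (if ε i then (1 : ℝ) else -1) * f i (a i)) ≤ M := hM ⟨a, ha, rfl⟩
  have h2 : (∑ i, (if ε' i then (1 : ℝ) else -1) * f i (a i)) ≤ M' := hM' ⟨a, ha, rfl⟩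
  have hkey : (∑ i, (if ε i then (1 : ℝ) else -1) * f i (a i))
      + (∑ i, (if ε' i then (1 : ℝ) else -1) * f i (a i))
      = ∑ i ∈ I, 2 * ((if ε i then (1 : ℝ) else -1) * f i (a i)) := by
    rw [← Finset.sum_add_distrib]
    rw [← Finset.sum_subset (Finset.subset_univ I)
      (fun i _ hi => by simp only [hε', if_neg hi]; cases ε i <;> simp)]
    apply Finset.sum_congr rfl
    intro i hi
    simp only [hε', if_pos hi]
    ring
  have h2x : 2 * ((fun a => ∑ i ∈ I, (if ε i then (1 : ℝ) else -1) * f i (a i)) a)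
      = ∑ i ∈ I, 2 * ((if ε i then (1 : ℝ) else -1) * f i (a i)) := by
    dsimp only; rw [Finset.mul_sum]
  linarith

end Helpers

set_option maxHeartbeats 1000000 in
/-- Rademacher contraction inequality with coordinate-dependent Lipschitz constants. -/
theorem rademacher_contraction (m : ℕ) (Φ : Fin m → ℝ → ℝ) (l : Fin m → ℝ)
    (hΦ : ∀ i, ∀ x y : ℝ, |Φ i x - Φ i y| ≤ l i * |x - y|)
    (A : Set (Fin m → ℝ)) (hA : A.Nonempty)
    (hbd₁ : ∀ ε : Fin m → Bool,
      BddAbove ((fun a => ∑ i, (if ε i then (1 : ℝ) else -1) * Φ i (a i)) '' A))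
    (hbd₂ : ∀ ε : Fin m → Bool,
      BddAbove ((fun a => ∑ i, (if ε i then (1 : ℝ) else -1) * (l i * a i)) '' A)) :
    (∑ ε : Fin m → Bool,
        sSup ((fun a => ∑ i, (if ε i then (1 : ℝ) else -1) * Φ i (a i)) '' A)) / 2 ^ m ≤
    (∑ ε : Fin m → Bool,
        sSup ((fun a => ∑ i, (if ε i then (1 : ℝ) else -1) * (l i * a i)) '' A)) / 2 ^ m := by
  -- abbreviations
  set s : (Fin m → Bool) → Fin m → ℝ := fun ε i => if ε i then (1 : ℝ) else -1 with hs
  -- nonnegativity of the Lipschitz constants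
  have hl : ∀ i, 0 ≤ l i := by
    intro i
    have := hΦ i 1 0
    simp only [sub_zero, abs_one, mul_one] at this
    exact le_trans (abs_nonneg _) this
  -- the interpolating coordinate functions
  set f : ℕ → Fin m → ℝ → ℝ := fun k i x => if (i : ℕ) < k then l i * x else Φ i x with hf
  -- boundedness of the interpolations
  have hbdmix : ∀ k : ℕ, ∀ ε : Fin m → Bool,
      BddAbove ((fun a => ∑ i, s ε i * f k i (a i)) '' A) := by
    intro k ε
    have h1 := bdd_partial (fun i x => l i * x) A hbd₂ ε
      (Finset.univ.filter (fun i : Fin m => (i : ℕ) < k))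
    have h2 := bdd_partial Φ A hbd₁ ε
      (Finset.univ.filter (fun i : Fin m => ¬ (i : ℕ) < k))
    have := bdd_image_add h1 h2
    have heq : ∀ a : Fin m → ℝ,
        (∑ i ∈ Finset.univ.filter (fun i : Fin m => (i : ℕ) < k), s ε i * (l i * a i))
        + (∑ i ∈ Finset.univ.filter (fun i : Fin m => ¬ (i : ℕ) < k), s ε i * Φ i (a i))
        = ∑ i, s ε i * f k i (a i) := by
      intro a
      rw [← Finset.sum_filter_add_sum_filter_not Finset.univ (fun i : Fin m => (i : ℕ) < k)
        (fun i => s ε i * f k i (a i))]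
      congr 1
      · exact Finset.sum_congr rfl fun i hi => by
          simp only [Finset.mem_filter] at hi; simp only [hf, if_pos hi.2]
      · exact Finset.sum_congr rfl fun i hi => by
          simp only [Finset.mem_filter] at hi; simp only [hf, if_neg hi.2]
    have himg : (fun a => ∑ i, s ε i * f k i (a i)) '' A
        = (fun a =>
            (∑ i ∈ Finset.univ.filter (fun i : Fin m => (i : ℕ) < k), s ε i * (l i * a i))
            + (∑ i ∈ Finset.univ.filter (fun i : Fin m => ¬ (i : ℕ) < k), s ε i * Φ i (a i))) '' A :=
      Set.image_congr fun a _ => (heq a).symm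
    rw [himg]
    exact this
  -- the interpolated expectations
  set E : ℕ → ℝ := fun k => ∑ ε : Fin m → Bool, sSup ((fun a => ∑ i, s ε i * f k i (a i)) '' A)
    with hE
  -- one contraction step
  have hstep : ∀ k : ℕ, k < m → E k ≤ E (k + 1) := by
    intro k hk
    set j : Fin m := ⟨k, hk⟩ with hj
    set flip : (Fin m → Bool) → Fin m → Bool := fun ε => Function.update ε j (!ε j) with hflip
    have hinv : Function.Involutive flip := by
      intro ε
      funext i
      rcases eq_or_ne i j with rfl | hij
      · simp [hflip, Function.update_self]
      · simp [hflip, Function.update_of_ne hij]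
    -- the paired inequality
    have hpair : ∀ ε : Fin m → Bool,
        sSup ((fun a => ∑ i, s ε i * f k i (a i)) '' A)
        + sSup ((fun a => ∑ i, s (flip ε) i * f k i (a i)) '' A)
        ≤ sSup ((fun a => ∑ i, s ε i * f (k + 1) i (a i)) '' A)
        + sSup ((fun a => ∑ i, s (flip ε) i * f (k + 1) i (a i)) '' A) := by
      intro ε
      set T : (Fin m → ℝ) → ℝ := fun a => ∑ i ∈ Finset.univ.erase j, s ε i * f k i (a i) with hT
      set u : (Fin m → ℝ) → ℝ := fun a => s ε j * Φ j (a j) with hu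
      set v : (Fin m → ℝ) → ℝ := fun a => s ε j * (l j * a j) with hv
      have hsflip : ∀ i, i ≠ j → s (flip ε) i = s ε i := by
        intro i hij
        simp [hs, hflip, Function.update_of_ne hij]
      have hsflipj : s (flip ε) j = - s ε j := by
        simp only [hs, hflip, Function.update_self]
        cases ε j <;> simp
      have hfkj : ∀ x, f k j x = Φ j x := by
        intro x; simp [hf, hj]
      have hfk1j : ∀ x, f (k + 1) j x = l j * x := by
        intro x; simp [hf, hj]
      have hfk1 : ∀ i : Fin m, i ≠ j → ∀ x, f (k + 1) i x = f k i x := by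
        intro i hij x
        have : (i : ℕ) ≠ k := fun h => hij (Fin.ext h)
        simp only [hf]
        rcases Nat.lt_or_ge (i : ℕ) k with h | h
        · rw [if_pos h, if_pos (Nat.lt_succ_of_lt h)]
        · have h' : ¬ (i : ℕ) < k := Nat.not_lt.mpr h
          have h'' : ¬ (i : ℕ) < k + 1 := by omega
          rw [if_neg h', if_neg h'']
      -- rewrite the four sums
      have e1 : ∀ a : Fin m → ℝ, (∑ i, s ε i * f k i (a i)) = T a + u a := by
        intro a
        rw [← Finset.add_sum_erase Finset.univ _ (Finset.mem_univ j), hfkj]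
        simp only [hT, hu]
        ring
      have e2 : ∀ a : Fin m → ℝ, (∑ i, s (flip ε) i * f k i (a i)) = T a - u a := by
        intro a
        rw [← Finset.add_sum_erase Finset.univ _ (Finset.mem_univ j), hfkj, hsflipj]
        have : (∑ i ∈ Finset.univ.erase j, s (flip ε) i * f k i (a i)) = T a :=
          Finset.sum_congr rfl fun i hi => by
            rw [hsflip i (Finset.mem_erase.mp hi).1]
        rw [this]; ring
      have e3 : ∀ a : Fin m → ℝ, (∑ i, s ε i * f (k + 1) i (a i)) = T a + v a := by
        intro a
        rw [← Finset.add_sum_erase Finset.univ _ (Finset.mem_univ j), hfk1j]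
        have : (∑ i ∈ Finset.univ.erase j, s ε i * f (k + 1) i (a i)) = T a :=
          Finset.sum_congr rfl fun i hi => by
            rw [hfk1 i (Finset.mem_erase.mp hi).1]
        rw [this]; ring
      have e4 : ∀ a : Fin m → ℝ, (∑ i, s (flip ε) i * f (k + 1) i (a i)) = T a - v a := by
        intro a
        rw [← Finset.add_sum_erase Finset.univ _ (Finset.mem_univ j), hfk1j, hsflipj]
        have : (∑ i ∈ Finset.univ.erase j, s (flip ε) i * f (k + 1) i (a i)) = T a :=
          Finset.sum_congr rfl fun i hi => by
            rw [hfk1 i (Finset.mem_erase.mp hi).1, hsflip i (Finset.mem_erase.mp hi).1]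
        rw [this]; ring
      have i1 : (fun a : Fin m → ℝ => ∑ i, s ε i * f k i (a i)) '' A
          = (fun a => T a + u a) '' A := Set.image_congr fun a _ => e1 a
      have i2 : (fun a : Fin m → ℝ => ∑ i, s (flip ε) i * f k i (a i)) '' A
          = (fun a => T a - u a) '' A := Set.image_congr fun a _ => e2 a
      have i3 : (fun a : Fin m → ℝ => ∑ i, s ε i * f (k + 1) i (a i)) '' A
          = (fun a => T a + v a) '' A := Set.image_congr fun a _ => e3 a
      have i4 : (fun a : Fin m → ℝ => ∑ i, s (flip ε) i * f (k + 1) i (a i)) '' A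
          = (fun a => T a - v a) '' A := Set.image_congr fun a _ => e4 a
      rw [i1, i2, i3, i4]
      apply key_step A hA T u v (i3 ▸ hbdmix (k + 1) ε) (i4 ▸ hbdmix (k + 1) (flip ε))
      intro a _ b _
      have habs : |s ε j| = 1 := by simp only [hs]; cases ε j <;> simp
      have h1 : u a - u b ≤ |Φ j (a j) - Φ j (b j)| := by
        simp only [hu]
        calc s ε j * Φ j (a j) - s ε j * Φ j (b j) = s ε j * (Φ j (a j) - Φ j (b j)) := by ring
        _ ≤ |s ε j * (Φ j (a j) - Φ j (b j))| := le_abs_self _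
        _ = |Φ j (a j) - Φ j (b j)| := by rw [abs_mul, habs, one_mul]
      have h2 : |Φ j (a j) - Φ j (b j)| ≤ l j * |a j - b j| := hΦ j (a j) (b j)
      have h3 : |v a - v b| = l j * |a j - b j| := by
        simp only [hv]
        rw [show s ε j * (l j * a j) - s ε j * (l j * b j) = s ε j * (l j * (a j - b j)) by ring,
          abs_mul, habs, one_mul, abs_mul, abs_of_nonneg (hl j)]
      rw [h3]
      exact h1.trans h2
    -- sum the paired inequalities
    have hsum : ∀ k' : ℕ,
        (∑ ε : Fin m → Bool, sSup ((fun a => ∑ i, s (flip ε) i * f k' i (a i)) '' A))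
        = E k' := by
      intro k'
      exact Fintype.sum_bijective flip hinv.bijective _ _ (fun x => rfl)
    have h2E : 2 * E k ≤ 2 * E (k + 1) := by
      have := Finset.sum_le_sum (fun ε (_ : ε ∈ Finset.univ) => hpair ε)
      rw [Finset.sum_add_distrib, Finset.sum_add_distrib, hsum k, hsum (k + 1)] at this
      simp only [hE] at this ⊢
      linarith
    linarith
  -- chain the steps
  have hmono : ∀ n : ℕ, n ≤ m → E 0 ≤ E n := by
    intro n
    induction n with
    | zero => intro _; exact le_refl _
    | succ p ih => intro hp; exact (ih (Nat.le_of_succ_le hp)).trans (hstep p (by omega))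
  have hfinal : E 0 ≤ E m := hmono m le_rfl
  -- identify the endpoints
  have hE0 : E 0 = ∑ ε : Fin m → Bool,
      sSup ((fun a => ∑ i, (if ε i then (1 : ℝ) else -1) * Φ i (a i)) '' A) := by
    refine Finset.sum_congr rfl fun ε _ => ?_
    have himg : ((fun a : Fin m → ℝ => ∑ i, s ε i * f 0 i (a i)) '' A)
        = ((fun a : Fin m → ℝ => ∑ i, (if ε i then (1 : ℝ) else -1) * Φ i (a i)) '' A) :=
      Set.image_congr fun a _ => Finset.sum_congr rfl fun i _ => by simp [hf, hs]
    rw [himg]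
  have hEm : E m = ∑ ε : Fin m → Bool,
      sSup ((fun a => ∑ i, (if ε i then (1 : ℝ) else -1) * (l i * a i)) '' A) := by
    refine Finset.sum_congr rfl fun ε _ => ?_
    have himg : ((fun a : Fin m → ℝ => ∑ i, s ε i * f m i (a i)) '' A)
        = ((fun a : Fin m → ℝ => ∑ i, (if ε i then (1 : ℝ) else -1) * (l i * a i)) '' A) :=
      Set.image_congr fun a _ => Finset.sum_congr rfl fun i _ => by
        simp only [hf, hs, if_pos i.isLt]
    rw [himg]
  rw [← hE0, ← hEm]
  gcongr
end

section
/- Let g ∈ C²([−1,1]) and consider the uniform mesh z₀ = −1 < z₁ < ⋯ < z_m = 1 with spacing h = 2/m. Then the piecewise-linear interpolant I_h g of g at the nodes zᵢ admits the representation I_h g(z) = g(z₀) + g′(ξ₀) σ(z − z₀) + Σᵢ₌₁^{m−1} g″(ξᵢ) h σ(z − zᵢ) for some points ξ₀ ∈ [z₀, z₁] and ξᵢ ∈ [z_{i−1}, z_{i+1}], where σ(x) = max(x,0). -/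
/-!
On the cell `[zⱼ, zⱼ₊₁]` only the ReLUs at `z₀, …, zⱼ` are active, and there the sum
`G₀ + (G₁ - G₀)/h · (x - z₀) + Σᵢ₌₁ʲ (Gᵢ₊₁ - 2Gᵢ + Gᵢ₋₁)/h · (x - zᵢ)` telescopes to the linear
interpolant of the nodal values `Gᵢ = g(zᵢ)`. The first divided difference is `g'(ξ₀)` by the mean
value theorem, and the second difference is `g''(ξᵢ) h²` by Cauchy's mean value theorem applied to
`t ↦ g(zᵢ + t) + g(zᵢ - t)` and `t ↦ t²`, followed by the mean value theorem for `g'`.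
-/

open Set

theorem exists_second_difference_eq_mul_sq {g g' g'' : ℝ → ℝ} {c h : ℝ} (hh : 0 < h)
    (hg' : ∀ x ∈ Icc (c - h) (c + h), HasDerivAt g (g' x) x)
    (hg'' : ∀ x ∈ Icc (c - h) (c + h), HasDerivAt g' (g'' x) x) :
    ∃ ξ ∈ Ioo (c - h) (c + h), g (c + h) - 2 * g c + g (c - h) = g'' ξ * h ^ 2 := by
  have hmem : ∀ t ∈ Icc 0 h, c + t ∈ Icc (c - h) (c + h) ∧ c - t ∈ Icc (c - h) (c + h) :=
    fun t ⟨ht₀, hth⟩ => ⟨⟨by linarith, by linarith⟩, ⟨by linarith, by linarith⟩⟩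
  have hF : ∀ t ∈ Icc 0 h,
      HasDerivAt (fun t => g (c + t) + g (c - t)) (g' (c + t) - g' (c - t)) t := by
    intro t ht
    have hplus := (hg' _ (hmem t ht).1).comp_const_add c t
    have hminus := (hg' _ (hmem t ht).2).comp_const_sub c t
    exact (hplus.add hminus).congr_deriv (sub_eq_add_neg _ _).symm
  obtain ⟨t, ht, hcauchy⟩ := exists_ratio_hasDerivAt_eq_ratio_slope
    (fun t => g (c + t) + g (c - t)) (fun t => g' (c + t) - g' (c - t)) hh
    (fun t ht => (hF t ht).continuousAt.continuousWithinAt)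
    (fun t ht => hF t (Ioo_subset_Icc_self ht))
    (fun t => t ^ 2) (fun t => 2 * t) (by fun_prop)
    (fun t _ => by simpa using hasDerivAt_pow 2 t)
  have hsub : Icc (c - t) (c + t) ⊆ Icc (c - h) (c + h) :=
    Icc_subset_Icc (by linarith [ht.2]) (by linarith [ht.2])
  obtain ⟨ξ, hξ, hslope⟩ := exists_hasDerivAt_eq_slope g' g'' (by linarith [ht.1] : c - t < c + t)
    (fun x hx => (hg'' x (hsub hx)).continuousAt.continuousWithinAt)
    (fun x hx => hg'' x (hsub (Ioo_subset_Icc_self hx)))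
  refine ⟨ξ, ⟨by linarith [hξ.1, ht.2], by linarith [hξ.2, ht.2]⟩, ?_⟩
  have ht0 : (2 : ℝ) * t ≠ 0 := by linarith [ht.1]
  rw [show c + t - (c - t) = 2 * t by ring, eq_div_iff ht0] at hslope
  simp only [add_zero, sub_zero] at hcauchy
  apply mul_right_cancel₀ ht0
  linear_combination -hcauchy - h ^ 2 * hslope

theorem exists_second_difference_add_mul_eq {g g' g'' : ℝ → ℝ} {a h : ℝ} (hh : 0 < h) {n : ℕ}
    (hg' : ∀ x ∈ Icc a (a + n * h), HasDerivAt g (g' x) x)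
    (hg'' : ∀ x ∈ Icc a (a + n * h), HasDerivAt g' (g'' x) x) {i : ℕ} (hi : 1 ≤ i)
    (hin : i + 1 ≤ n) :
    ∃ ξ ∈ Icc (a + (i - 1) * h) (a + (i + 1) * h),
      g (a + ↑(i + 1) * h) - 2 * g (a + i * h) + g (a + ↑(i - 1) * h) = g'' ξ * h ^ 2 := by
  have hi' : (1 : ℝ) ≤ i := by exact_mod_cast hi
  have hin' : (i : ℝ) + 1 ≤ n := by exact_mod_cast hin
  have hsub : Icc (a + i * h - h) (a + i * h + h) ⊆ Icc a (a + n * h) :=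
    Icc_subset_Icc (by nlinarith) (by nlinarith)
  obtain ⟨ξ, hξ, hdiff⟩ := exists_second_difference_eq_mul_sq hh
    (fun x hx => hg' x (hsub hx)) (fun x hx => hg'' x (hsub hx))
  refine ⟨ξ, Ioo_subset_Icc_self (by convert hξ using 2 <;> ring), ?_⟩
  rw [Nat.cast_sub hi]
  push_cast
  convert hdiff using 4 <;> ring

theorem exists_lt_mem_Icc_add_mul {a h x : ℝ} {n : ℕ} (hn : 1 ≤ n)
    (hx : x ∈ Icc a (a + n * h)) :
    ∃ j < n, x ∈ Icc (a + j * h) (a + (j + 1) * h) := by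
  induction n, hn using Nat.le_induction with
  | base => exact ⟨0, one_pos, by simpa using hx⟩
  | succ n hn ih =>
    by_cases hxn : x ≤ a + n * h
    · obtain ⟨j, hj, hjx⟩ := ih ⟨hx.1, hxn⟩
      exact ⟨j, by omega, hjx⟩
    · exact ⟨n, by omega, le_of_not_ge hxn, by simpa using hx.2⟩

theorem sum_Icc_mul_max_sub_zero_eq {c : ℕ → ℝ} {a h x : ℝ} (hh : 0 < h) {j n : ℕ} (hjn : j ≤ n)
    (hx : x ∈ Icc (a + j * h) (a + (j + 1) * h)) :
    ∑ i ∈ Finset.Icc 1 n, c i * max (x - (a + i * h)) 0 =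
      ∑ i ∈ Finset.Icc 1 j, c i * (x - (a + i * h)) := by
  obtain ⟨hxj, hxj1⟩ := hx
  induction n, hjn using Nat.le_induction with
  | base =>
    refine Finset.sum_congr rfl fun i hi => ?_
    have hij : (i : ℝ) ≤ j := by exact_mod_cast (Finset.mem_Icc.mp hi).2
    rw [max_eq_left (by nlinarith)]
  | succ n hjn ih =>
    have hjn' : (j : ℝ) + 1 ≤ n + 1 := by exact_mod_cast Nat.succ_le_succ hjn
    rw [Finset.sum_Icc_succ_top (by omega), ih, max_eq_right (by push_cast; nlinarith), mul_zero,
      add_zero]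

theorem add_sum_second_differences_eq_linear_interp (G : ℕ → ℝ) {a h : ℝ} (hh : h ≠ 0) (x : ℝ)
    (j : ℕ) :
    G 0 + (G 1 - G 0) / h * (x - a) +
        ∑ i ∈ Finset.Icc 1 j, (G (i + 1) - 2 * G i + G (i - 1)) / h * (x - (a + i * h)) =
      G j * ((a + (j + 1) * h - x) / h) + G (j + 1) * ((x - (a + j * h)) / h) := by
  induction j with
  | zero => simp only [zero_lt_one, Finset.Icc_eq_empty_of_lt, Finset.sum_empty]; field_simp; ring
  | succ j ih =>
    rw [Finset.sum_Icc_succ_top (by omega), ← add_assoc, ih]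
    simp only [Nat.add_sub_cancel]
    push_cast
    field_simp
    ring

theorem add_sum_second_differences_mul_max_eq_linear_interp (G : ℕ → ℝ) {a h x : ℝ} (hh : 0 < h)
    {j n : ℕ} (hjn : j ≤ n) (hx : x ∈ Icc (a + j * h) (a + (j + 1) * h)) :
    G 0 + (G 1 - G 0) / h * max (x - a) 0 +
        ∑ i ∈ Finset.Icc 1 n, (G (i + 1) - 2 * G i + G (i - 1)) / h * max (x - (a + i * h)) 0 =
      G j * ((a + (j + 1) * h - x) / h) + G (j + 1) * ((x - (a + j * h)) / h) := by
  have hax : a ≤ x := le_trans (by simp only [le_add_iff_nonneg_right]; positivity) hx.1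
  rw [sum_Icc_mul_max_sub_zero_eq hh hjn hx, max_eq_left (sub_nonneg.mpr hax)]
  exact add_sum_second_differences_eq_linear_interp G hh.ne' x j

theorem interpolant_relu_representation_general (m : ℕ) (hm : 1 ≤ m)
    (g g' g'' : ℝ → ℝ)
    (hg' : ∀ x ∈ Set.Icc (-1 : ℝ) 1, HasDerivAt g (g' x) x)
    (hg'' : ∀ x ∈ Set.Icc (-1 : ℝ) 1, HasDerivAt g' (g'' x) x)
    (Ihg : ℝ → ℝ)
    (hlin : ∀ i < m, ∀ x ∈ Set.Icc (-1 + (i : ℝ) * (2 / (m : ℝ)))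
        (-1 + ((i : ℝ) + 1) * (2 / (m : ℝ))),
      Ihg x = g (-1 + (i : ℝ) * (2 / (m : ℝ))) *
          ((-1 + ((i : ℝ) + 1) * (2 / (m : ℝ)) - x) / (2 / (m : ℝ))) +
        g (-1 + ((i : ℝ) + 1) * (2 / (m : ℝ))) *
          ((x - (-1 + (i : ℝ) * (2 / (m : ℝ)))) / (2 / (m : ℝ)))) :
    ∃ ξ : ℕ → ℝ,
      ξ 0 ∈ Set.Icc (-1 : ℝ) (-1 + 2 / (m : ℝ)) ∧
      (∀ i, 1 ≤ i → i ≤ m - 1 →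
        ξ i ∈ Set.Icc (-1 + ((i : ℝ) - 1) * (2 / (m : ℝ))) (-1 + ((i : ℝ) + 1) * (2 / (m : ℝ)))) ∧
      ∀ x ∈ Set.Icc (-1 : ℝ) 1,
        Ihg x = g (-1) + g' (ξ 0) * max (x - (-1)) 0 +
          ∑ i ∈ Finset.Icc 1 (m - 1),
            g'' (ξ i) * (2 / (m : ℝ)) * max (x - (-1 + (i : ℝ) * (2 / (m : ℝ)))) 0 := by
  set h : ℝ := 2 / (m : ℝ) with h_def
  have hh : 0 < h := by positivity
  have hmesh : -1 + (m : ℝ) * h = 1 := by rw [h_def]; field_simp; ring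
  have hfirst : Icc (-1) (-1 + h) ⊆ Icc (-1 : ℝ) 1 :=
    Icc_subset_Icc le_rfl (by nlinarith [(by exact_mod_cast hm : (1 : ℝ) ≤ m)])
  obtain ⟨ξ₀, hξ₀, hslope⟩ := exists_hasDerivAt_eq_slope g g' (by linarith : -1 < -1 + h)
    (fun x hx => (hg' x (hfirst hx)).continuousAt.continuousWithinAt)
    (fun x hx => hg' x (hfirst (Ioo_subset_Icc_self hx)))
  choose! ξ hξ using fun i (hi : 1 ≤ i) (him : i + 1 ≤ m) =>
    exists_second_difference_add_mul_eq (g' := g') (g'' := g'') hh (by rwa [hmesh])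
      (by rwa [hmesh]) hi him
  refine ⟨Function.update ξ 0 ξ₀, by simpa using Ioo_subset_Icc_self hξ₀,
    fun i hi him => ?_, fun x hx => ?_⟩
  · simpa [Function.update_of_ne (by omega : i ≠ 0)] using (hξ i hi (by omega)).1
  obtain ⟨j, hjm, hjx⟩ :=
    exists_lt_mem_Icc_add_mul (a := -1) (h := h) hm ⟨hx.1, by linarith [hx.2]⟩
  have hcoef : ∀ i ∈ Finset.Icc 1 (m - 1),
      g'' (Function.update ξ 0 ξ₀ i) * h * max (x - (-1 + i * h)) 0 =
        (g (-1 + ↑(i + 1) * h) - 2 * g (-1 + i * h) + g (-1 + ↑(i - 1) * h)) / h *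
          max (x - (-1 + i * h)) 0 := by
    intro i hi
    obtain ⟨hi1, him⟩ := Finset.mem_Icc.mp hi
    rw [Function.update_of_ne (by omega), (hξ i hi1 (by omega)).2]
    field_simp
  have hrelu := add_sum_second_differences_mul_max_eq_linear_interp (fun i => g (-1 + i * h)) hh
    (by omega : j ≤ m - 1) hjx
  rw [hlin j hjm x hjx, Finset.sum_congr rfl hcoef, Function.update_self, hslope,
    add_sub_cancel_left]
  simpa only [Nat.cast_zero, zero_mul, add_zero, Nat.cast_one, one_mul, Nat.cast_add] using
    hrelu.symm

/-- ReLU representation of the piecewise-linear interpolant of a `C²` function on the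
uniform mesh `zᵢ = -1 + i·(2/m)` of `[-1,1]`. -/
theorem interpolant_relu_representation (m : ℕ) (hm : 1 ≤ m)
    (g g' g'' : ℝ → ℝ)
    (hg' : ∀ x ∈ Set.Icc (-1 : ℝ) 1, HasDerivAt g (g' x) x)
    (hg'' : ∀ x ∈ Set.Icc (-1 : ℝ) 1, HasDerivAt g' (g'' x) x)
    (hg''cont : ContinuousOn g'' (Set.Icc (-1 : ℝ) 1))
    (Ihg : ℝ → ℝ)
    (hinterp : ∀ i ≤ m, Ihg (-1 + (i : ℝ) * (2 / (m : ℝ))) = g (-1 + (i : ℝ) * (2 / (m : ℝ))))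
    (hlin : ∀ i < m, ∀ x ∈ Set.Icc (-1 + (i : ℝ) * (2 / (m : ℝ)))
        (-1 + ((i : ℝ) + 1) * (2 / (m : ℝ))),
      Ihg x = g (-1 + (i : ℝ) * (2 / (m : ℝ))) *
          ((-1 + ((i : ℝ) + 1) * (2 / (m : ℝ)) - x) / (2 / (m : ℝ))) +
        g (-1 + ((i : ℝ) + 1) * (2 / (m : ℝ))) *
          ((x - (-1 + (i : ℝ) * (2 / (m : ℝ)))) / (2 / (m : ℝ)))) :
    ∃ ξ : ℕ → ℝ,
      ξ 0 ∈ Set.Icc (-1 : ℝ) (-1 + 2 / (m : ℝ)) ∧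
      (∀ i, 1 ≤ i → i ≤ m - 1 →
        ξ i ∈ Set.Icc (-1 + ((i : ℝ) - 1) * (2 / (m : ℝ))) (-1 + ((i : ℝ) + 1) * (2 / (m : ℝ)))) ∧
      ∀ x ∈ Set.Icc (-1 : ℝ) 1,
        Ihg x = g (-1) + g' (ξ 0) * max (x - (-1)) 0 +
          ∑ i ∈ Finset.Icc 1 (m - 1),
            g'' (ξ i) * (2 / (m : ℝ)) * max (x - (-1 + (i : ℝ) * (2 / (m : ℝ)))) 0 :=
  interpolant_relu_representation_general m hm g g' g'' hg' hg'' Ihg hlin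
end

section
/- Let g ∈ C²([−1,1]) with ‖g^{(s)}‖_{L^∞} ≤ B for s = 0, 1, 2. Then for every m ≥ 1 there exists a two-layer ReLU network g_m(z) = Σᵢ₌₁^{6m−1} aᵢ σ(εᵢ z + tᵢ) with εᵢ ∈ {−1, +1}, |tᵢ| ≤ 1, |aᵢ| ≤ 2B/m, and Σᵢ |aᵢ| ≤ 5B, such that ‖g − g_m‖_{H¹([−1,1])} ≤ 4√2 B / m. -/
/-!
The network is the piecewise-linear interpolant of `g` on the uniform mesh of width `2 / m`,
written in ReLU form. On each cell its slope is `g' ξ` for some `ξ` in the cell, so, `g'` being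
`B`-Lipschitz, the derivative error is at most `2B / m`; the value error vanishes at both ends of
the cell, hence is at most half a cell times that. Consecutive slopes differ by at most `2B / m`
(mean value theorem for `t ↦ g (t + 2 / m) - g t`), which bounds the weights of the kinks.
-/

open Set MeasureTheory

section Calculus

variable {f f' F : ℝ → ℝ} {s : Set ℝ} {a b z C L : ℝ}

lemma abs_sub_le_of_abs_deriv_le (hs : Convex ℝ s) (hf : ∀ x ∈ s, HasDerivAt f (f' x) x)
    (hC : ∀ x ∈ s, |f' x| ≤ C) {x y : ℝ} (hx : x ∈ s) (hy : y ∈ s) :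
    |f x - f y| ≤ C * |x - y| :=
  hs.norm_image_sub_le_of_norm_hasDerivWithin_le (fun t ht => (hf t ht).hasDerivWithinAt)
    hC hy hx

lemma abs_le_of_abs_deriv_le_of_eq_zero (hf : ∀ x ∈ Icc a b, HasDerivAt f (f' x) x)
    (hC : ∀ x ∈ Icc a b, |f' x| ≤ C) (ha : f a = 0) (hb : f b = 0) (hz : z ∈ Icc a b) :
    |f z| ≤ C * ((b - a) / 2) := by
  have hab : a ≤ b := hz.1.trans hz.2
  have hleft := abs_sub_le_of_abs_deriv_le (convex_Icc a b) hf hC hz (left_mem_Icc.2 hab)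
  have hright := abs_sub_le_of_abs_deriv_le (convex_Icc a b) hf hC (right_mem_Icc.2 hab) hz
  rw [ha, sub_zero, abs_of_nonneg (sub_nonneg.2 hz.1)] at hleft
  rw [hb, zero_sub, abs_neg, abs_of_nonneg (sub_nonneg.2 hz.2)] at hright
  linarith

lemma integral_sq_le_of_abs_le (hab : a ≤ b) (hf : ∀ x ∈ Ioo a b, |f x| ≤ C) :
    ∫ x in a..b, f x ^ 2 ≤ C ^ 2 * (b - a) := by
  rw [intervalIntegral.integral_of_le hab, integral_Ioc_eq_integral_Ioo,
    ← Real.volume_real_Ioo_of_le hab]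
  refine (Real.le_norm_self _).trans (norm_setIntegral_le_of_norm_le_const measure_Ioo_lt_top
    fun x hx => ?_)
  rw [Real.norm_eq_abs, abs_pow]
  exact pow_le_pow_left₀ (abs_nonneg _) (hf x hx) 2

lemma sqrt_integral_sq_add_integral_sq_le (hab : a ≤ b) (hC : 0 ≤ C)
    (hf : ∀ x ∈ Ioo a b, |f x| ≤ C) (hF : ∀ x ∈ Ioo a b, |F x| ≤ C) :
    √((∫ x in a..b, f x ^ 2) + ∫ x in a..b, F x ^ 2) ≤ C * √(2 * (b - a)) := by
  rw [← Real.sqrt_sq hC, ← Real.sqrt_mul (sq_nonneg C)]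
  apply Real.sqrt_le_sqrt
  linarith [integral_sq_le_of_abs_le hab hf, integral_sq_le_of_abs_le hab hF]

variable (hs : Convex ℝ s) (hf : ∀ x ∈ s, HasDerivAt f (f' x) x)
  (hL : ∀ x ∈ s, ∀ y ∈ s, |f' x - f' y| ≤ L * |x - y|)
include hs hf

lemma exists_mem_Ioo_deriv_eq_slope (hab : a < b) (ha : a ∈ s) (hb : b ∈ s) :
    ∃ c ∈ Ioo a b, f' c = slope f a b := by
  have hsub : Icc a b ⊆ s := hs.ordConnected.out ha hb
  rw [slope_def_field]
  exact exists_hasDerivAt_eq_slope f f' hab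
    (fun x hx => (hf x (hsub hx)).continuousAt.continuousWithinAt)
    (fun x hx => hf x (hsub (Ioo_subset_Icc_self hx)))

lemma abs_slope_le (hC : ∀ x ∈ s, |f' x| ≤ C) (hab : a < b) (ha : a ∈ s) (hb : b ∈ s) :
    |slope f a b| ≤ C := by
  obtain ⟨c, hc, hfc⟩ := exists_mem_Ioo_deriv_eq_slope hs hf hab ha hb
  exact hfc ▸ hC c (hs.ordConnected.out ha hb (Ioo_subset_Icc_self hc))

include hL

lemma abs_deriv_sub_slope_le (hab : a < b) (ha : a ∈ s) (hb : b ∈ s) (hz : z ∈ Icc a b) :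
    |f' z - slope f a b| ≤ L * (b - a) := by
  obtain ⟨c, hc, hfc⟩ := exists_mem_Ioo_deriv_eq_slope hs hf hab ha hb
  have hsub : Icc a b ⊆ s := hs.ordConnected.out ha hb
  have hL0 : 0 ≤ L := nonneg_of_mul_nonneg_left ((abs_nonneg _).trans (hL a ha b hb))
    (abs_pos.2 (sub_ne_zero.2 hab.ne))
  calc |f' z - slope f a b| = |f' z - f' c| := by rw [hfc]
    _ ≤ L * |z - c| := hL z (hsub hz) c (hsub (Ioo_subset_Icc_self hc))
    _ ≤ L * (b - a) := by
        gcongr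
        rw [abs_le]
        constructor <;> linarith [hz.1, hz.2, hc.1, hc.2]

lemma abs_sub_linear_interp_le (hab : a < b) (ha : a ∈ s) (hb : b ∈ s) (hz : z ∈ Icc a b) :
    |f z - (f a + slope f a b * (z - a))| ≤ L * (b - a) ^ 2 / 2 := by
  have hsub : Icc a b ⊆ s := hs.ordConnected.out ha hb
  have herr := abs_le_of_abs_deriv_le_of_eq_zero
    (f := fun x => f x - (f a + slope f a b * (x - a))) (f' := fun x => f' x - slope f a b)
    (fun x hx => by
      simpa using (hf x (hsub hx)).fun_sub
        ((((hasDerivAt_id x).sub_const a).const_mul (slope f a b)).const_add (f a)))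
    (fun x hx => abs_deriv_sub_slope_le hs hf hL hab ha hb hx)
    (by simp) (by rw [slope_def_field]; field_simp [sub_ne_zero.2 hab.ne']; ring) hz
  linarith

lemma abs_slope_sub_slope_le {h : ℝ} (hh : 0 < h) (ha : a ∈ s) (ha2 : a + 2 * h ∈ s) :
    |slope f (a + h) (a + 2 * h) - slope f a (a + h)| ≤ L * h := by
  have hsub : Icc a (a + 2 * h) ⊆ s := hs.ordConnected.out ha ha2
  have hshift : ∀ x ∈ Icc a (a + h), x ∈ s ∧ x + h ∈ s := fun x hx =>
    ⟨hsub ⟨hx.1, by linarith [hx.2]⟩, hsub ⟨by linarith [hx.1], by linarith [hx.2]⟩⟩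
  have hF := abs_sub_le_of_abs_deriv_le (convex_Icc a (a + h))
    (f := fun x => f (x + h) - f x) (f' := fun x => f' (x + h) - f' x) (C := L * h)
    (fun x hx => by
      simpa using ((hf _ (hshift x hx).2).comp x ((hasDerivAt_id x).add_const h)).fun_sub
        (hf x (hshift x hx).1))
    (fun x hx => by
      simpa [abs_sub_comm, abs_of_pos hh] using hL _ (hshift x hx).2 x (hshift x hx).1)
    (right_mem_Icc.2 (by linarith)) (left_mem_Icc.2 (by linarith))
  rw [show a + h - a = h by ring, abs_of_pos hh, show a + h + h = a + 2 * h by ring] at hF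
  rw [slope_def_field, slope_def_field, show a + 2 * h - (a + h) = h by ring,
    show a + h - a = h by ring, ← sub_div, abs_div, abs_of_pos hh, div_le_iff₀ hh]
  convert hF using 2

end Calculus

noncomputable section

namespace TwoLayerRelu

def knot (m j : ℕ) : ℝ := -1 + 2 * j / m

def knotSlope (g : ℝ → ℝ) (m j : ℕ) : ℝ := slope g (knot m j) (knot m (j + 1))

variable {m : ℕ}

lemma knot_zero (m : ℕ) : knot m 0 = -1 := by simp [knot]

lemma knot_self (hm : m ≠ 0) : knot m m = 1 := by
  simp only [knot]; field_simp; ring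

lemma knot_succ (m j : ℕ) : knot m (j + 1) = knot m j + 2 / m := by
  simp only [knot]; push_cast; ring

lemma knot_lt_knot_succ (hm : m ≠ 0) (j : ℕ) : knot m j < knot m (j + 1) := by
  rw [knot_succ]; linarith [show (0 : ℝ) < 2 / m by positivity]

lemma knot_mono (m : ℕ) : Monotone (knot m) := fun j k hjk => by
  simp only [knot]; gcongr

lemma knot_mem_Icc (hm : m ≠ 0) {j : ℕ} (hj : j ≤ m) : knot m j ∈ Icc (-1) 1 :=
  ⟨knot_zero m ▸ knot_mono m (Nat.zero_le j), knot_self hm ▸ knot_mono m hj⟩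

lemma exists_knot_le_lt (hm : m ≠ 0) {z : ℝ} (hz : z ∈ Ico (-1) 1) :
    ∃ k < m, knot m k ≤ z ∧ z < knot m (k + 1) := by
  have hm' : (0 : ℝ) < m := by positivity
  set r := (z + 1) * m / 2
  have hr : 0 ≤ r := div_nonneg (mul_nonneg (by linarith [hz.1]) hm'.le) zero_le_two
  have hz_eq : z = -1 + 2 * r / m := by field_simp; ring
  refine ⟨⌊r⌋₊, ?_, ?_, ?_⟩
  · rw [Nat.floor_lt hr, div_lt_iff₀ two_pos]; nlinarith [hz.2]
  · rw [hz_eq, knot]; gcongr; exact Nat.floor_le hr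
  · rw [hz_eq, knot]; push_cast; gcongr; exact Nat.lt_floor_add_one r

lemma apply_knot_succ (hm : m ≠ 0) (g : ℝ → ℝ) (j : ℕ) :
    g (knot m (j + 1)) = g (knot m j) + knotSlope g m j * (2 / m) := by
  rw [knotSlope, slope_def_field, knot_succ]; field_simp; ring

def reluNet {ι : Type*} [Fintype ι] (a e t : ι → ℝ) (z : ℝ) : ℝ :=
  ∑ i, a i * max (e i * z + t i) 0

def reluNetDeriv {ι : Type*} [Fintype ι] (a e t : ι → ℝ) (z : ℝ) : ℝ :=
  ∑ i, a i * if 0 ≤ e i * z + t i then e i else 0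

lemma reluNet_comp_equiv {ι κ : Type*} [Fintype ι] [Fintype κ] (σ : ι ≃ κ) (a e t : ι → ℝ) :
    reluNet (a ∘ σ.symm) (e ∘ σ.symm) (t ∘ σ.symm) = reluNet a e t :=
  funext fun z => Equiv.sum_comp σ.symm fun i => a i * max (e i * z + t i) 0

lemma reluNetDeriv_comp_equiv {ι κ : Type*} [Fintype ι] [Fintype κ] (σ : ι ≃ κ)
    (a e t : ι → ℝ) :
    reluNetDeriv (a ∘ σ.symm) (e ∘ σ.symm) (t ∘ σ.symm) = reluNetDeriv a e t :=
  funext fun z => Equiv.sum_comp σ.symm fun i => a i * if 0 ≤ e i * z + t i then e i else 0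

/-- Five groups of `m` neurons carry the affine part `g (-1) + knotSlope g m 0 * (z + 1)`, using
`1 = (σ(z+1) + σ(-z-1) + σ(-z+1) + σ(z-1)) / 2` on `[-1, 1]`; spreading it over `m` copies keeps
every weight of size `O(B / m)`. Neuron `inr j` is the kink at `knot m (j + 1)`. -/
abbrev Neuron (m : ℕ) := (Fin 5 × Fin m) ⊕ Fin (m - 1)

def weight (g : ℝ → ℝ) (m : ℕ) : Neuron m → ℝ
  | .inl (b, _) => ![g (-1) / 2, g (-1) / 2, g (-1) / 2, g (-1) / 2, knotSlope g m 0] b / m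
  | .inr j => knotSlope g m (j + 1) - knotSlope g m j

def dir : Neuron m → ℝ
  | .inl (b, _) => ![1, -1, -1, 1, 1] b
  | .inr _ => 1

def offset (m : ℕ) : Neuron m → ℝ
  | .inl (b, _) => ![1, -1, 1, -1, 1] b
  | .inr j => -knot m (j + 1)

lemma reluNet_weight_eq (hm : m ≠ 0) (g : ℝ → ℝ) {z : ℝ} (hz : z ∈ Icc (-1) 1) :
    reluNet (weight g m) dir (offset m) z = g (-1) + knotSlope g m 0 * (z + 1) +
      ∑ j ∈ Finset.range (m - 1),
        (knotSlope g m (j + 1) - knotSlope g m j) * max (z - knot m (j + 1)) 0 := by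
  simp only [reluNet, Fintype.sum_sum_type, Fintype.sum_prod_type, Fin.sum_univ_five, weight, dir,
    offset, Matrix.cons_val, one_mul, neg_one_mul, ← sub_eq_add_neg, Finset.sum_const,
    Finset.card_univ, Fintype.card_fin, nsmul_eq_mul]
  rw [Fin.sum_univ_eq_sum_range (fun j => (knotSlope g m (j + 1) - knotSlope g m j) *
      max (z - knot m (j + 1)) 0),
    max_eq_left (by linarith [hz.1]), max_eq_right (by linarith [hz.1]),
    max_eq_left (by linarith [hz.2]), max_eq_right (by linarith [hz.2])]
  field_simp
  ring

lemma reluNetDeriv_weight_eq (hm : m ≠ 0) (g : ℝ → ℝ) {z : ℝ} (hz : z ∈ Ioo (-1) 1) :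
    reluNetDeriv (weight g m) dir (offset m) z = knotSlope g m 0 +
      ∑ j ∈ Finset.range (m - 1),
        (knotSlope g m (j + 1) - knotSlope g m j) * if 0 ≤ z - knot m (j + 1) then 1 else 0 := by
  simp only [reluNetDeriv, Fintype.sum_sum_type, Fintype.sum_prod_type, Fin.sum_univ_five, weight,
    dir, offset, Matrix.cons_val, one_mul, neg_one_mul, ← sub_eq_add_neg, Finset.sum_const,
    Finset.card_univ, Fintype.card_fin, nsmul_eq_mul]
  rw [Fin.sum_univ_eq_sum_range (fun j => (knotSlope g m (j + 1) - knotSlope g m j) *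
      if 0 ≤ z - knot m (j + 1) then 1 else 0),
    if_pos (by linarith [hz.1]), if_neg (by linarith [hz.1]),
    if_pos (by linarith [hz.2]), if_neg (by linarith [hz.2])]
  field_simp
  ring

lemma sum_relu_knots_eq {k : ℕ} (hk : k < m) (c : ℕ → ℝ) {z : ℝ}
    (hz : z ∈ Icc (knot m k) (knot m (k + 1))) :
    ∑ j ∈ Finset.range (m - 1), c j * max (z - knot m (j + 1)) 0 =
      ∑ j ∈ Finset.range k, c j * (z - knot m (j + 1)) := by
  rw [← Finset.sum_subset (Finset.range_subset_range.2 (by omega : k ≤ m - 1))]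
  · refine Finset.sum_congr rfl fun j hj => ?_
    have := knot_mono m (Finset.mem_range.1 hj : j + 1 ≤ k)
    rw [max_eq_left (by linarith [hz.1])]
  · intro j _ hj
    have := knot_mono m (not_lt.1 (Finset.mem_range.not.1 hj) |> Nat.succ_le_succ)
    rw [max_eq_right (by linarith [hz.2]), mul_zero]

lemma sum_step_knots_eq {k : ℕ} (hk : k < m) (c : ℕ → ℝ) {z : ℝ}
    (hz : z ∈ Ico (knot m k) (knot m (k + 1))) :
    ∑ j ∈ Finset.range (m - 1), c j * (if 0 ≤ z - knot m (j + 1) then 1 else 0) =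
      ∑ j ∈ Finset.range k, c j := by
  rw [← Finset.sum_subset (Finset.range_subset_range.2 (by omega : k ≤ m - 1))]
  · refine Finset.sum_congr rfl fun j hj => ?_
    have := knot_mono m (Finset.mem_range.1 hj : j + 1 ≤ k)
    rw [if_pos (by linarith [hz.1]), mul_one]
  · intro j _ hj
    have := knot_mono m (not_lt.1 (Finset.mem_range.not.1 hj) |> Nat.succ_le_succ)
    rw [if_neg (by linarith [hz.2]), mul_zero]

lemma knotSlope_telescope (hm : m ≠ 0) (g : ℝ → ℝ) (k : ℕ) (z : ℝ) :
    g (-1) + knotSlope g m 0 * (z + 1) +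
        ∑ j ∈ Finset.range k, (knotSlope g m (j + 1) - knotSlope g m j) * (z - knot m (j + 1)) =
      g (knot m k) + knotSlope g m k * (z - knot m k) := by
  induction k with
  | zero => simp [knot_zero]
  | succ k ih =>
    rw [Finset.sum_range_succ, ← add_assoc, ih, apply_knot_succ hm g k, knot_succ]
    ring

lemma reluNet_eq_of_mem_cell (hm : m ≠ 0) (g : ℝ → ℝ) {k : ℕ} (hk : k < m) {z : ℝ}
    (hz : z ∈ Icc (knot m k) (knot m (k + 1))) :
    reluNet (weight g m) dir (offset m) z = g (knot m k) + knotSlope g m k * (z - knot m k) := by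
  have hz' : z ∈ Icc (-1) 1 :=
    ⟨(knot_mem_Icc hm hk.le).1.trans hz.1, hz.2.trans (knot_mem_Icc hm hk).2⟩
  rw [reluNet_weight_eq hm g hz', sum_relu_knots_eq hk _ hz, knotSlope_telescope hm]

lemma reluNetDeriv_eq_of_mem_cell (hm : m ≠ 0) (g : ℝ → ℝ) {k : ℕ} (hk : k < m) {z : ℝ}
    (hz : z ∈ Ioo (-1) 1) (hzk : z ∈ Ico (knot m k) (knot m (k + 1))) :
    reluNetDeriv (weight g m) dir (offset m) z = knotSlope g m k := by
  rw [reluNetDeriv_weight_eq hm g hz, sum_step_knots_eq hk _ hzk,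
    Finset.sum_range_sub (knotSlope g m), add_sub_cancel]

lemma dir_eq_one_or (i : Neuron m) : dir i = 1 ∨ dir i = -1 := by
  rcases i with ⟨b, _⟩ | _
  · fin_cases b <;> simp [dir]
  · simp [dir]

lemma abs_offset_le (hm : m ≠ 0) (i : Neuron m) : |offset m i| ≤ 1 := by
  rcases i with ⟨b, _⟩ | j
  · fin_cases b <;> simp [offset]
  · rw [offset, abs_neg, abs_le]
    exact knot_mem_Icc hm (by omega)

section Bounds

variable {g g' : ℝ → ℝ} {B L : ℝ} (hm : m ≠ 0) (hg : ∀ x ∈ Icc (-1) 1, HasDerivAt g (g' x) x)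
include hm hg

lemma abs_knotSlope_le (hC : ∀ x ∈ Icc (-1) 1, |g' x| ≤ B) {j : ℕ} (hj : j < m) :
    |knotSlope g m j| ≤ B :=
  abs_slope_le (convex_Icc _ _) hg hC (knot_lt_knot_succ hm j)
    (knot_mem_Icc hm hj.le) (knot_mem_Icc hm hj)

lemma abs_knotSlope_succ_sub_le
    (hL : ∀ x ∈ Icc (-1) 1, ∀ y ∈ Icc (-1) 1, |g' x - g' y| ≤ L * |x - y|) {j : ℕ}
    (hj : j + 2 ≤ m) : |knotSlope g m (j + 1) - knotSlope g m j| ≤ 2 * L / m := by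
  have h1 := knot_succ m j
  have h2 : knot m (j + 1 + 1) = knot m j + 2 * (2 / m) := by rw [knot_succ, h1]; ring
  have := abs_slope_sub_slope_le (convex_Icc _ _) hg hL (show (0 : ℝ) < 2 / m by positivity)
    (knot_mem_Icc hm (by omega)) (h2 ▸ knot_mem_Icc hm hj)
  rw [← h1, ← h2, mul_div_assoc', mul_comm] at this
  exact this

lemma abs_weight_le (h0 : |g (-1)| ≤ B) (hC : ∀ x ∈ Icc (-1) 1, |g' x| ≤ B)
    (hL : ∀ x ∈ Icc (-1) 1, ∀ y ∈ Icc (-1) 1, |g' x - g' y| ≤ B * |x - y|) (i : Neuron m) :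
    |weight g m i| ≤ 2 * B / m := by
  have hB : 0 ≤ B := (abs_nonneg _).trans h0
  rcases i with ⟨b, _⟩ | j
  · have hc : |![g (-1) / 2, g (-1) / 2, g (-1) / 2, g (-1) / 2, knotSlope g m 0] b| ≤ B := by
      have := abs_knotSlope_le hm hg hC (Nat.pos_of_ne_zero hm)
      fin_cases b <;> simp [abs_div] <;> linarith
    rw [weight, abs_div, Nat.abs_cast]
    gcongr
    linarith
  · exact abs_knotSlope_succ_sub_le hm hg hL (by omega)

lemma sum_abs_weight_le (h0 : |g (-1)| ≤ B) (hC : ∀ x ∈ Icc (-1) 1, |g' x| ≤ B)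
    (hL : ∀ x ∈ Icc (-1) 1, ∀ y ∈ Icc (-1) 1, |g' x - g' y| ≤ B * |x - y|) :
    ∑ i, |weight g m i| ≤ 5 * B := by
  have hm' : (0 : ℝ) < m := by positivity
  have hs := abs_knotSlope_le hm hg hC (Nat.pos_of_ne_zero hm)
  have hkinks : ∑ j : Fin (m - 1), |weight g m (.inr j)| ≤ 2 * B := calc
    _ ≤ (m - 1 : ℕ) * (2 * B / m) := by
      simpa using Finset.sum_le_card_nsmul Finset.univ _ _ fun j _ =>
        abs_weight_le hm hg h0 hC hL (.inr j)
    _ ≤ m * (2 * B / m) := by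
      gcongr
      · exact div_nonneg (by linarith [(abs_nonneg _).trans h0]) hm'.le
      · exact Nat.sub_le m 1
    _ = 2 * B := by field_simp
  simp only [Fintype.sum_sum_type, Fintype.sum_prod_type, Fin.sum_univ_five, weight,
    Matrix.cons_val, Finset.sum_const, Finset.card_univ, Fintype.card_fin,
    nsmul_eq_mul, abs_div, Nat.abs_cast, abs_two] at hkinks ⊢
  field_simp
  linarith

variable (hL : ∀ x ∈ Icc (-1) 1, ∀ y ∈ Icc (-1) 1, |g' x - g' y| ≤ L * |x - y|)
include hL

lemma abs_sub_reluNet_le {z : ℝ} (hz : z ∈ Ico (-1) 1) :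
    |g z - reluNet (weight g m) dir (offset m) z| ≤ 2 * L / m ^ 2 := by
  obtain ⟨k, hk, hzk, hzk'⟩ := exists_knot_le_lt hm hz
  rw [reluNet_eq_of_mem_cell hm g hk ⟨hzk, hzk'.le⟩]
  calc _ ≤ L * (knot m (k + 1) - knot m k) ^ 2 / 2 :=
        abs_sub_linear_interp_le (convex_Icc _ _) hg hL (knot_lt_knot_succ hm k)
          (knot_mem_Icc hm hk.le) (knot_mem_Icc hm hk) ⟨hzk, hzk'.le⟩
    _ = 2 * L / m ^ 2 := by rw [knot_succ]; ring

lemma abs_deriv_sub_reluNetDeriv_le {z : ℝ} (hz : z ∈ Ioo (-1) 1) :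
    |g' z - reluNetDeriv (weight g m) dir (offset m) z| ≤ 2 * L / m := by
  obtain ⟨k, hk, hzk, hzk'⟩ := exists_knot_le_lt hm (Ioo_subset_Ico_self hz)
  rw [reluNetDeriv_eq_of_mem_cell hm g hk hz ⟨hzk, hzk'⟩]
  calc _ ≤ L * (knot m (k + 1) - knot m k) :=
        abs_deriv_sub_slope_le (convex_Icc _ _) hg hL (knot_lt_knot_succ hm k)
          (knot_mem_Icc hm hk.le) (knot_mem_Icc hm hk) ⟨hzk, hzk'.le⟩
    _ = 2 * L / m := by rw [knot_succ]; ring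

end Bounds

end TwoLayerRelu

end

open TwoLayerRelu in
theorem two_layer_relu_H1_approx_general (m : ℕ) (hm : 1 ≤ m) (B : ℝ)
    (g g' g'' : ℝ → ℝ)
    (hg' : ∀ x ∈ Set.Icc (-1 : ℝ) 1, HasDerivAt g (g' x) x)
    (hg'' : ∀ x ∈ Set.Icc (-1 : ℝ) 1, HasDerivAt g' (g'' x) x)
    (hgB : ∀ x ∈ Set.Icc (-1 : ℝ) 1, |g x| ≤ B)
    (hg'B : ∀ x ∈ Set.Icc (-1 : ℝ) 1, |g' x| ≤ B)
    (hg''B : ∀ x ∈ Set.Icc (-1 : ℝ) 1, |g'' x| ≤ B) :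
    ∃ a t e : Fin (6 * m - 1) → ℝ,
      (∀ i, e i = 1 ∨ e i = -1) ∧
      (∀ i, |t i| ≤ 1) ∧
      (∀ i, |a i| ≤ 2 * B / m) ∧
      (∑ i, |a i|) ≤ 5 * B ∧
      Real.sqrt
        ((∫ z in (-1 : ℝ)..1, (g z - ∑ i, a i * max (e i * z + t i) 0) ^ 2) +
          ∫ z in (-1 : ℝ)..1,
            (g' z - ∑ i, a i * (if 0 ≤ e i * z + t i then e i else 0)) ^ 2) ≤
      4 * Real.sqrt 2 * B / m := by
  have hm0 : m ≠ 0 := by omega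
  have hB : 0 ≤ B := (abs_nonneg _).trans (hgB 0 (by norm_num))
  have hg1 := hgB (-1) (by norm_num)
  have hL : ∀ x ∈ Icc (-1 : ℝ) 1, ∀ y ∈ Icc (-1 : ℝ) 1, |g' x - g' y| ≤ B * |x - y| :=
    fun x hx y hy => abs_sub_le_of_abs_deriv_le (convex_Icc _ _) hg'' hg''B hx hy
  let σ : Neuron m ≃ Fin (6 * m - 1) := Fintype.equivFinOfCardEq (by simp; omega)
  refine ⟨weight g m ∘ σ.symm, offset m ∘ σ.symm, dir ∘ σ.symm, fun _ => dir_eq_one_or _,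
    fun _ => abs_offset_le hm0 _, fun _ => abs_weight_le hm0 hg' hg1 hg'B hL _,
    (Equiv.sum_comp σ.symm _).trans_le (sum_abs_weight_le hm0 hg' hg1 hg'B hL), ?_⟩
  have hval : ∀ z ∈ Ioo (-1 : ℝ) 1,
      |g z - reluNet (weight g m ∘ σ.symm) (dir ∘ σ.symm) (offset m ∘ σ.symm) z| ≤ 2 * B / m :=
    fun z hz => by
      rw [reluNet_comp_equiv]
      refine (abs_sub_reluNet_le hm0 hg' hL (Ioo_subset_Ico_self hz)).trans ?_
      gcongr
      exact le_self_pow₀ (by exact_mod_cast hm) two_ne_zero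
  have hder : ∀ z ∈ Ioo (-1 : ℝ) 1, |g' z - reluNetDeriv (weight g m ∘ σ.symm) (dir ∘ σ.symm)
      (offset m ∘ σ.symm) z| ≤ 2 * B / m := fun z hz => by
    rw [reluNetDeriv_comp_equiv]; exact abs_deriv_sub_reluNetDeriv_le hm0 hg' hL hz
  calc _ ≤ 2 * B / m * √(2 * (1 - -1)) :=
        sqrt_integral_sq_add_integral_sq_le (by norm_num) (by positivity) hval hder
    _ = 4 * B / m := by
        rw [show (2 : ℝ) * (1 - -1) = 2 ^ 2 by norm_num, Real.sqrt_sq two_pos.le]; ring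
    _ ≤ 4 * √2 * B / m := by
        gcongr
        exact le_mul_of_one_le_right (by norm_num) (Real.one_le_sqrt.2 (by norm_num))

/-- A `C²` function on `[-1,1]` with `‖g⁽ˢ⁾‖_∞ ≤ B`, `s = 0,1,2`, can be approximated in
`H¹([-1,1])` at rate `4√2·B/m` by a two-layer ReLU network with `6m-1` controlled units. -/
theorem two_layer_relu_H1_approx (m : ℕ) (hm : 1 ≤ m) (B : ℝ)
    (g g' g'' : ℝ → ℝ)
    (hg' : ∀ x ∈ Set.Icc (-1 : ℝ) 1, HasDerivAt g (g' x) x)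
    (hg'' : ∀ x ∈ Set.Icc (-1 : ℝ) 1, HasDerivAt g' (g'' x) x)
    (hg''cont : ContinuousOn g'' (Set.Icc (-1 : ℝ) 1))
    (hgB : ∀ x ∈ Set.Icc (-1 : ℝ) 1, |g x| ≤ B)
    (hg'B : ∀ x ∈ Set.Icc (-1 : ℝ) 1, |g' x| ≤ B)
    (hg''B : ∀ x ∈ Set.Icc (-1 : ℝ) 1, |g'' x| ≤ B) :
    ∃ a t e : Fin (6 * m - 1) → ℝ,
      (∀ i, e i = 1 ∨ e i = -1) ∧
      (∀ i, |t i| ≤ 1) ∧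
      (∀ i, |a i| ≤ 2 * B / m) ∧
      (∑ i, |a i|) ≤ 5 * B ∧
      Real.sqrt
        ((∫ z in (-1 : ℝ)..1, (g z - ∑ i, a i * max (e i * z + t i) 0) ^ 2) +
          ∫ z in (-1 : ℝ)..1,
            (g' z - ∑ i, a i * (if 0 ≤ e i * z + t i then e i else 0)) ^ 2) ≤
      4 * Real.sqrt 2 * B / m :=
  two_layer_relu_H1_approx_general m hm B g g' g'' hg' hg'' hgB hg'B hg''B
end

section
/- For (ω₁, t₁), (ω₂, t₂) ∈ ℝ^d × ℝ with |ω₁|₁ = |ω₂|₁ = 1 and t₁, t₂ ∈ [−1,1], and Ω = (0,1)^d, the ReLU ridge functions satisfy ‖σ(ω₁·x + t₁) − σ(ω₂·x + t₂)‖²_{H¹(Ω)} ≤ 4(|ω₁ − ω₂|₁² + |t₁ − t₂|²) + 2 ∫_Ω |1_{ω₁·x + t₁ ≥ 0} − 1_{ω₂·x + t₂ ≥ 0}|² dx. -/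
/-!
On the unit cube `|ω · x| ≤ |ω|₁`, so the two ridge arguments differ by at most
`|ω₁ - ω₂|₁ + |t₁ - t₂|`, and since `σ` is 1-Lipschitz the value term is at most
`2 (|ω₁ - ω₂|₁² + |t₁ - t₂|²)`. For the gradient term write
`ω₁ χ₁ - ω₂ χ₂ = (ω₁ - ω₂) χ₁ + ω₂ (χ₁ - χ₂)`: as `χ₁ ∈ {0, 1}` and `|ω₂|₂ ≤ |ω₂|₁ = 1`, it is at
most `2 |ω₁ - ω₂|₁² + 2 (χ₁ - χ₂)²`. The cube has volume one, so integrating the pointwise bound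
gives the estimate.
-/

open MeasureTheory Finset

theorem integral_add_le_of_ae_add_le {α : Type*} [MeasurableSpace α] {μ : Measure α}
    {f g h : α → ℝ} (hf : AEStronglyMeasurable f μ) (hg : AEStronglyMeasurable g μ)
    (hf₀ : 0 ≤ᵐ[μ] f) (hg₀ : 0 ≤ᵐ[μ] g) (hh : Integrable h μ)
    (hle : ∀ᵐ x ∂μ, f x + g x ≤ h x) : ∫ x, f x ∂μ + ∫ x, g x ∂μ ≤ ∫ x, h x ∂μ := by
  have hfi : Integrable f μ := hh.mono' hf <| by
    filter_upwards [hf₀, hg₀, hle] with x (hfx : 0 ≤ f x) (hgx : 0 ≤ g x) hx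
    rw [Real.norm_of_nonneg hfx]; linarith
  have hgi : Integrable g μ := hh.mono' hg <| by
    filter_upwards [hf₀, hg₀, hle] with x (hfx : 0 ≤ f x) (hgx : 0 ≤ g x) hx
    rw [Real.norm_of_nonneg hgx]; linarith
  rw [← integral_add hfi hgi]
  exact integral_mono_ae (hfi.add hgi) hh hle

section

variable {ι : Type*}

theorem abs_sum_mul_le_sum_abs_of_abs_le_one (s : Finset ι) (w : ι → ℝ) {x : ι → ℝ}
    (hx : ∀ i ∈ s, |x i| ≤ 1) : |∑ i ∈ s, w i * x i| ≤ ∑ i ∈ s, |w i| :=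
  (abs_sum_le_sum_abs _ _).trans <| sum_le_sum fun i hi => by
    rw [abs_mul]; exact mul_le_of_le_one_right (abs_nonneg _) (hx i hi)

theorem sum_sq_le_sq_sum_abs (s : Finset ι) (f : ι → ℝ) :
    ∑ i ∈ s, f i ^ 2 ≤ (∑ i ∈ s, |f i|) ^ 2 := by
  simpa only [sq_abs] using sum_sq_le_sq_sum_of_nonneg fun i (_ : i ∈ s) => abs_nonneg (f i)

theorem sum_sq_mul_sub_mul_le (s : Finset ι) (a b : ι → ℝ) {c₁ c₂ : ℝ} (hc₁ : c₁ ^ 2 ≤ 1) :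
    ∑ i ∈ s, (a i * c₁ - b i * c₂) ^ 2 ≤
      2 * (∑ i ∈ s, |a i - b i|) ^ 2 + 2 * (∑ i ∈ s, |b i|) ^ 2 * (c₁ - c₂) ^ 2 := by
  have hterm : ∀ i ∈ s, (a i * c₁ - b i * c₂) ^ 2 ≤
      2 * (a i - b i) ^ 2 + 2 * b i ^ 2 * (c₁ - c₂) ^ 2 := fun i _ => by
    calc (a i * c₁ - b i * c₂) ^ 2 = ((a i - b i) * c₁ + b i * (c₁ - c₂)) ^ 2 := by ring
      _ ≤ 2 * (((a i - b i) * c₁) ^ 2 + (b i * (c₁ - c₂)) ^ 2) := add_sq_le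
      _ ≤ 2 * (a i - b i) ^ 2 + 2 * b i ^ 2 * (c₁ - c₂) ^ 2 := by
        rw [mul_pow, mul_pow]
        nlinarith [mul_le_of_le_one_right (sq_nonneg (a i - b i)) hc₁]
  calc ∑ i ∈ s, (a i * c₁ - b i * c₂) ^ 2
      ≤ ∑ i ∈ s, (2 * (a i - b i) ^ 2 + 2 * b i ^ 2 * (c₁ - c₂) ^ 2) := sum_le_sum hterm
    _ = 2 * ∑ i ∈ s, (a i - b i) ^ 2 + 2 * (∑ i ∈ s, b i ^ 2) * (c₁ - c₂) ^ 2 := by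
      rw [sum_add_distrib, ← mul_sum, ← sum_mul, ← mul_sum]
    _ ≤ _ := by gcongr <;> exact sum_sq_le_sq_sum_abs s _

variable [Fintype ι]

def ridge (ω : ι → ℝ) (t : ℝ) (x : ι → ℝ) : ℝ := ∑ i, ω i * x i + t

noncomputable def heaviside (r : ℝ) : ℝ := if 0 ≤ r then 1 else 0

theorem heaviside_sq_le_one (r : ℝ) : heaviside r ^ 2 ≤ 1 := by
  unfold heaviside; split_ifs <;> norm_num

theorem sq_heaviside_sub_heaviside_le_one (r s : ℝ) : (heaviside r - heaviside s) ^ 2 ≤ 1 := by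
  unfold heaviside; split_ifs <;> norm_num

@[fun_prop]
theorem measurable_heaviside : Measurable heaviside :=
  Measurable.ite measurableSet_Ici measurable_const measurable_const

@[fun_prop]
theorem measurable_ridge (ω : ι → ℝ) (t : ℝ) : Measurable (ridge ω t) := by
  unfold ridge; fun_prop

theorem abs_ridge_sub_ridge_le (ω₁ ω₂ : ι → ℝ) (t₁ t₂ : ℝ) {x : ι → ℝ} (hx : ∀ i, |x i| ≤ 1) :
    |ridge ω₁ t₁ x - ridge ω₂ t₂ x| ≤ ∑ i, |ω₁ i - ω₂ i| + |t₁ - t₂| := by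
  have hsplit : ridge ω₁ t₁ x - ridge ω₂ t₂ x = ∑ i, (ω₁ i - ω₂ i) * x i + (t₁ - t₂) := by
    simp only [ridge, sub_mul, sum_sub_distrib]; ring
  rw [hsplit]
  calc |∑ i, (ω₁ i - ω₂ i) * x i + (t₁ - t₂)|
      ≤ |∑ i, (ω₁ i - ω₂ i) * x i| + |t₁ - t₂| := abs_add_le _ _
    _ ≤ ∑ i, |ω₁ i - ω₂ i| + |t₁ - t₂| := by
      gcongr; exact abs_sum_mul_le_sum_abs_of_abs_le_one _ _ fun i _ => hx i

theorem sq_relu_ridge_sub_le (ω₁ ω₂ : ι → ℝ) (t₁ t₂ : ℝ) {x : ι → ℝ} (hx : ∀ i, |x i| ≤ 1) :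
    (max (ridge ω₁ t₁ x) 0 - max (ridge ω₂ t₂ x) 0) ^ 2 ≤
      2 * ((∑ i, |ω₁ i - ω₂ i|) ^ 2 + |t₁ - t₂| ^ 2) := by
  calc (max (ridge ω₁ t₁ x) 0 - max (ridge ω₂ t₂ x) 0) ^ 2
      ≤ (∑ i, |ω₁ i - ω₂ i| + |t₁ - t₂|) ^ 2 := by
        rw [← sq_abs]
        gcongr
        exact (abs_max_sub_max_le_abs _ _ _).trans (abs_ridge_sub_ridge_le ω₁ ω₂ t₁ t₂ hx)
    _ ≤ _ := add_sq_le

theorem relu_ridge_H1_integrand_le (ω₁ ω₂ : ι → ℝ) (t₁ t₂ : ℝ) (hω₂ : ∑ i, |ω₂ i| = 1)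
    {x : ι → ℝ} (hx : ∀ i, |x i| ≤ 1) :
    (max (ridge ω₁ t₁ x) 0 - max (ridge ω₂ t₂ x) 0) ^ 2 +
        ∑ i, (ω₁ i * heaviside (ridge ω₁ t₁ x) - ω₂ i * heaviside (ridge ω₂ t₂ x)) ^ 2 ≤
      4 * ((∑ i, |ω₁ i - ω₂ i|) ^ 2 + |t₁ - t₂| ^ 2) +
        2 * (heaviside (ridge ω₁ t₁ x) - heaviside (ridge ω₂ t₂ x)) ^ 2 := by
  have hvalue := sq_relu_ridge_sub_le ω₁ ω₂ t₁ t₂ hx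
  have hgrad := sum_sq_mul_sub_mul_le univ ω₁ ω₂ (heaviside_sq_le_one (ridge ω₁ t₁ x))
    (c₂ := heaviside (ridge ω₂ t₂ x))
  rw [hω₂, one_pow, mul_one] at hgrad
  nlinarith [sq_nonneg |t₁ - t₂|]

theorem relu_ridge_H1_bound_of_isProbabilityMeasure {μ : Measure (ι → ℝ)} [IsProbabilityMeasure μ]
    (ω₁ ω₂ : ι → ℝ) (t₁ t₂ : ℝ) (hω₂ : ∑ i, |ω₂ i| = 1) (hx : ∀ᵐ x ∂μ, ∀ i, |x i| ≤ 1) :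
    ∫ x, (max (ridge ω₁ t₁ x) 0 - max (ridge ω₂ t₂ x) 0) ^ 2 ∂μ +
        ∫ x, ∑ i, (ω₁ i * heaviside (ridge ω₁ t₁ x) - ω₂ i * heaviside (ridge ω₂ t₂ x)) ^ 2 ∂μ ≤
      4 * ((∑ i, |ω₁ i - ω₂ i|) ^ 2 + |t₁ - t₂| ^ 2) +
        2 * ∫ x, (heaviside (ridge ω₁ t₁ x) - heaviside (ridge ω₂ t₂ x)) ^ 2 ∂μ := by
  have hjump : Integrable
      (fun x => (heaviside (ridge ω₁ t₁ x) - heaviside (ridge ω₂ t₂ x)) ^ 2) μ :=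
    .of_bound (by fun_prop) 1 <| .of_forall fun x => by
      rw [Real.norm_of_nonneg (sq_nonneg _)]; exact sq_heaviside_sub_heaviside_le_one _ _
  calc _ ≤ ∫ x, (4 * ((∑ i, |ω₁ i - ω₂ i|) ^ 2 + |t₁ - t₂| ^ 2) +
        2 * (heaviside (ridge ω₁ t₁ x) - heaviside (ridge ω₂ t₂ x)) ^ 2) ∂μ :=
      integral_add_le_of_ae_add_le (by fun_prop) (by fun_prop)
        (.of_forall fun _ => sq_nonneg _)
        (.of_forall fun _ => sum_nonneg fun _ _ => sq_nonneg _)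
        ((integrable_const _).add (hjump.const_mul 2))
        (hx.mono fun x hx => relu_ridge_H1_integrand_le ω₁ ω₂ t₁ t₂ hω₂ hx)
    _ = _ := by
      rw [integral_add (integrable_const _) (hjump.const_mul 2), integral_const,
        integral_const_mul, probReal_univ, one_smul]

end

theorem relu_ridge_H1_bound_general (d : ℕ) (ω₁ ω₂ : Fin d → ℝ) (t₁ t₂ : ℝ)
    (hω₂ : ∑ i, |ω₂ i| = 1) :
    (∫ x in Set.univ.pi (fun _ : Fin d => Set.Ioo (0 : ℝ) 1),
        (max (∑ i, ω₁ i * x i + t₁) 0 - max (∑ i, ω₂ i * x i + t₂) 0) ^ 2) +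
      (∫ x in Set.univ.pi (fun _ : Fin d => Set.Ioo (0 : ℝ) 1),
        ∑ i, (ω₁ i * (if 0 ≤ ∑ j, ω₁ j * x j + t₁ then (1 : ℝ) else 0) -
              ω₂ i * (if 0 ≤ ∑ j, ω₂ j * x j + t₂ then (1 : ℝ) else 0)) ^ 2) ≤
    4 * ((∑ i, |ω₁ i - ω₂ i|) ^ 2 + |t₁ - t₂| ^ 2) +
      2 * ∫ x in Set.univ.pi (fun _ : Fin d => Set.Ioo (0 : ℝ) 1),
        ((if 0 ≤ ∑ j, ω₁ j * x j + t₁ then (1 : ℝ) else 0) -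
          (if 0 ≤ ∑ j, ω₂ j * x j + t₂ then (1 : ℝ) else 0)) ^ 2 := by
  set Ω : Set (Fin d → ℝ) := Set.univ.pi fun _ => Set.Ioo 0 1
  have : IsProbabilityMeasure (volume.restrict Ω) := ⟨by simp [Ω, volume_pi_pi]⟩
  have hΩ : ∀ᵐ x ∂volume.restrict Ω, ∀ i, |x i| ≤ 1 :=
    (ae_restrict_iff' (MeasurableSet.univ_pi fun _ => measurableSet_Ioo)).2 <| .of_forall
      fun x hx i => abs_le.2 ⟨by linarith [(hx i trivial).1], by linarith [(hx i trivial).2]⟩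
  -- `ridge` and `heaviside` unfold to the expressions of the statement
  exact relu_ridge_H1_bound_of_isProbabilityMeasure ω₁ ω₂ t₁ t₂ hω₂ hΩ

/-- `H¹((0,1)^d)` distance bound between two ReLU ridge functions
`σ(ω₁·x + t₁)` and `σ(ω₂·x + t₂)` with `|ω₁|₁ = |ω₂|₁ = 1`, `t₁, t₂ ∈ [-1,1]`:
the squared `H¹` norm of the difference (with weak gradients `ωₖ 1_{ωₖ·x+tₖ ≥ 0}`)
is at most `4(|ω₁-ω₂|₁² + |t₁-t₂|²) + 2∫ |1_{ω₁·x+t₁≥0} - 1_{ω₂·x+t₂≥0}|²`. -/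
theorem relu_ridge_H1_bound (d : ℕ) (ω₁ ω₂ : Fin d → ℝ) (t₁ t₂ : ℝ)
    (hω₁ : ∑ i, |ω₁ i| = 1) (hω₂ : ∑ i, |ω₂ i| = 1)
    (ht₁ : t₁ ∈ Set.Icc (-1 : ℝ) 1) (ht₂ : t₂ ∈ Set.Icc (-1 : ℝ) 1) :
    (∫ x in Set.univ.pi (fun _ : Fin d => Set.Ioo (0 : ℝ) 1),
        (max (∑ i, ω₁ i * x i + t₁) 0 - max (∑ i, ω₂ i * x i + t₂) 0) ^ 2) +
      (∫ x in Set.univ.pi (fun _ : Fin d => Set.Ioo (0 : ℝ) 1),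
        ∑ i, (ω₁ i * (if 0 ≤ ∑ j, ω₁ j * x j + t₁ then (1 : ℝ) else 0) -
              ω₂ i * (if 0 ≤ ∑ j, ω₂ j * x j + t₂ then (1 : ℝ) else 0)) ^ 2) ≤
    4 * ((∑ i, |ω₁ i - ω₂ i|) ^ 2 + |t₁ - t₂| ^ 2) +
      2 * ∫ x in Set.univ.pi (fun _ : Fin d => Set.Ioo (0 : ℝ) 1),
        ((if 0 ≤ ∑ j, ω₁ j * x j + t₁ then (1 : ℝ) else 0) -
          (if 0 ≤ ∑ j, ω₂ j * x j + t₂ then (1 : ℝ) else 0)) ^ 2 :=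
  relu_ridge_H1_bound_general d ω₁ ω₂ t₁ t₂ hω₂
end
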